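/- Let H be a Hopf algebra over a field k and I ⊆ H a Hopf ideal such that B := H^{co H/I} ⊆ H is a homogeneous quotient-Hopf–Galois extension. Then the map φ₀: [H]_B → (H/I) ⊗_H ad(H), [h]_B ↦ π(1) ⊗_H h, is a bijection which is left H/I-linear, where H/I acts on [H]_B by the Miyashita–Ulbrich action π(h) ▷ [h']_B := [h(2) h' S(h(1))]_B and on (H/I) ⊗_H ad(H) through the algebra projection H → H/I acting by left multiplication on the first tensor factor. Consequently the functors − ⊗_{H/I} [ad(H)]_B and − ⊗_H ad(H) on right H/I-modules are naturally isomorphic. -/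

import Mathlib

/-!
STATEMENT 13 (comparison with the Jara–Ştefan isomorphism):  Let `I ⊆ H` be a Hopf ideal such
that `B = H^{co H/I} ⊆ H` is a homogeneous quotient-Hopf–Galois extension.  Then
`φ₀ : [H]_B → (H/I) ⊗_H ad(H)`, `[h]_B ↦ π(1) ⊗_H h`, is a bijection which is left
`H/I`-linear for the Miyashita–Ulbrich action `π(h) ▷ [h']_B = [h₍₂₎h'S(h₍₁₎)]_B` on the source
and left multiplication on the first tensor factor on the target.  Consequently the functors
`- ⊗_{H/I} [ad(H)]_B` and `- ⊗_H ad(H)` are naturally isomorphic: for every right `H/I`-module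
`N` (a right `H`-module killing `I`) the canonical comparison of the two tensor products is a
linear bijection.
-/

open TensorProduct

noncomputable section

universe u

variable (k : Type u) [Field k] (H : Type u) [Ring H] [HopfAlgebra k H]

/-- `b ∈ B = H^{co H/I}`:  `b₍₁₎ ⊗ π(b₍₂₎) = b ⊗ π(1)`. -/
def IsCoinvariant (I : Submodule k H) (b : H) : Prop :=
  (LinearMap.lTensor H I.mkQ) (Coalgebra.comul (R := k) b) = b ⊗ₜ[k] I.mkQ 1

/-- `I` is a Hopf ideal of `H`. -/
def IsHopfIdeal (I : Submodule k H) : Prop :=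
  (∀ x ∈ I, ∀ h : H, x * h ∈ I) ∧
  (∀ x ∈ I, ∀ h : H, h * x ∈ I) ∧
  (∀ x ∈ I, Coalgebra.counit (R := k) x = (0 : k)) ∧
  (∀ x ∈ I, Coalgebra.comul (R := k) x ∈
    LinearMap.range (TensorProduct.map I.subtype (LinearMap.id (M := H))) ⊔
      LinearMap.range (TensorProduct.map (LinearMap.id (M := H)) I.subtype)) ∧
  (∀ x ∈ I, HopfAlgebra.antipode (R := k) x ∈ I)

/-- the left adjoint action `adAct (h ⊗ m) = h₍₂₎ * m * S(h₍₁₎)` as a linear map. -/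
def adAct : H ⊗[k] H →ₗ[k] H :=
  (LinearMap.mul' k H).comp
    ((TensorProduct.comm k H H).toLinearMap.comp
      ((LinearMap.lTensor H (LinearMap.mul' k H)).comp
        ((TensorProduct.assoc k H H H).toLinearMap.comp
          ((LinearMap.rTensor H (LinearMap.rTensor H (HopfAlgebra.antipode (R := k)))).comp
            (LinearMap.rTensor H (Coalgebra.comul (R := k)))))))

/-- commutators `[H, B]`, whose quotient is `[H]_B = H/[H,B]`. -/
def commB (I : Submodule k H) : Submodule k H :=
  Submodule.span k {x : H | ∃ h b : H, IsCoinvariant k H I b ∧ x = h * b - b * h}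

/-- the `⊗_H`-relations of `(H/I) ⊗_H ad(H)` inside `(H/I) ⊗ H` (on representatives). -/
def relAdZero (I : Submodule k H) : Submodule k ((H ⧸ I) ⊗[k] H) :=
  Submodule.span k
    {x | ∃ v p m : H,
      x = I.mkQ (v * p) ⊗ₜ[k] m - I.mkQ v ⊗ₜ[k] (adAct k H (p ⊗ₜ[k] m))}

/-- the relations of `N ⊗_{H/I} [ad(H)]_B` inside `N ⊗ H`, for a right `H/I`-module `N`
with action `r`: the `⊗`-balance over `H/I` acting by the Miyashita–Ulbrich action on
`[ad(H)]_B`, together with the `B`-commutator relations. -/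
def relMU (N : Type u) [AddCommGroup N] [Module k N] (r : N →ₗ[k] H →ₗ[k] N)
    (I : Submodule k H) : Submodule k (N ⊗[k] H) :=
  Submodule.span k
    ({x | ∃ (n : N) (p m : H), x = (r n p) ⊗ₜ[k] m - n ⊗ₜ[k] (adAct k H (p ⊗ₜ[k] m))} ∪
     {x | ∃ (n : N) (m b : H), IsCoinvariant k H I b ∧ x = n ⊗ₜ[k] (m * b - b * m)})

/-- the relations of `N ⊗_H ad(H)` inside `N ⊗ H`. -/
def relH (N : Type u) [AddCommGroup N] [Module k N] (r : N →ₗ[k] H →ₗ[k] N) :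
    Submodule k (N ⊗[k] H) :=
  Submodule.span k
    {x | ∃ (n : N) (p m : H), x = (r n p) ⊗ₜ[k] m - n ⊗ₜ[k] (adAct k H (p ⊗ₜ[k] m))}

end

/-!
The inverse of `[h]_B ↦ π(1) ⊗_H h` is `π(v) ⊗_H n ↦ [v ▷ n]_B`: the composites are the identity
since `1 ▷ n = n` and `π(1) ⊗_H (v ▷ n) = π(v) ⊗_H n`. Both maps are well defined by two facts.

* `I ▷ H ⊆ [H, B]`. For `x ∈ I` the Galois map sends `S(x₍₁₎) ⊗_B x₍₂₎` to `1 ⊗ π(x) = 0`, so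
  this element vanishes, and `g ⊗_B g' ↦ [g' n g]_B` is well defined on `H ⊗_B H` and sends it
  to `[x ▷ n]_B`.
* `[H, B]` lies in every subspace containing `I ▷ H`: for coinvariant `b`,
  `b m = Σ b₍₂₎ ▷ (m b₍₁₎)` and `m b = 1 ▷ (m b)`, while `Δb - b ⊗ 1 ∈ H ⊗ I`.
  For a right `H`-module `N` killed by `I` this also makes the commutator relations of
  `N ⊗_{H/I} [ad(H)]_B` redundant in `N ⊗_H ad(H)`.
-/

section

open Coalgebra HopfAlgebra LinearMap

variable {k : Type u} [Field k] {H : Type u} [Ring H] [HopfAlgebra k H]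

lemma adAct_tmul {p : H} {ι : Type*} (r : Repr k p ι) (n : H) :
    adAct k H (p ⊗ₜ n) = ∑ i ∈ r.index, r.right i * n * antipode k (r.left i) := by
  simp [adAct, ← r.eq, sum_tmul, mul_assoc]

@[simp]
lemma adAct_one_tmul (n : H) : adAct k H (1 ⊗ₜ n) = n := by
  simp [adAct, Bialgebra.comul_one, Algebra.TensorProduct.one_def]

lemma adAct_mul_tmul (v p m : H) :
    adAct k H ((v * p) ⊗ₜ m) = adAct k H (v ⊗ₜ adAct k H (p ⊗ₜ m)) := by
  simp only [adAct_tmul ((ℛ k v).mul (ℛ k p)), adAct_tmul (ℛ k v), adAct_tmul (ℛ k p),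
    Repr.mul_index, Repr.mul_left, Repr.mul_right, Finset.sum_product, Finset.mul_sum,
    Finset.sum_mul, antipode_mul_antidistrib, mul_assoc]

lemma sum_adAct_tmul_mul {b : H} {ι : Type*} (r : Repr k b ι) (m : H) :
    ∑ i ∈ r.index, adAct k H (r.right i ⊗ₜ (m * r.left i)) = b * m := by
  let F : H ⊗[k] (H ⊗[k] H) →ₗ[k] H :=
    mul' k H ∘ₗ (TensorProduct.comm k H H).toLinearMap ∘ₗ
      (mul' k H ∘ₗ TensorProduct.map (mulLeft k m) (antipode k)).rTensor H ∘ₗ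
      (TensorProduct.assoc k H H H).symm.toLinearMap
  -- `F (x ⊗ (y ⊗ z)) = z (m x) S(y)`, applied to coassociativity
  have hcoassoc := congr(F $(sum_tmul_tmul_eq r (fun i ↦ ℛ k (r.left i)) fun i ↦ ℛ k (r.right i)))
  simp only [map_sum, F, coe_comp, Function.comp_apply, LinearEquiv.coe_coe,
    TensorProduct.assoc_symm_tmul, rTensor_tmul, map_tmul, mul'_apply, comm_tmul,
    mulLeft_apply] at hcoassoc
  simp only [adAct_tmul (ℛ k (r.right _)), mul_assoc] at hcoassoc ⊢
  simp only [← hcoassoc, ← Finset.mul_sum, sum_mul_antipode_eq_smul, mul_smul_comm, mul_one,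
    ← smul_mul_assoc, ← Finset.sum_mul, sum_counit_smul]

def canonicalMap (I : Submodule k H) : H ⊗[k] H →ₗ[k] H ⊗[k] (H ⧸ I) :=
  (mul' k H).rTensor (H ⧸ I) ∘ₗ (TensorProduct.assoc k H H (H ⧸ I)).symm.toLinearMap ∘ₗ
    (I.mkQ.lTensor H ∘ₗ comul).lTensor H

/-- The relations of `H ⊗_B H` inside `H ⊗ H`. -/
def balancingRel (I : Submodule k H) : Submodule k (H ⊗[k] H) :=
  Submodule.span k
    {x : H ⊗[k] H | ∃ g g' b : H, IsCoinvariant k H I b ∧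
      x = (g * b) ⊗ₜ[k] g' - g ⊗ₜ[k] (b * g')}

lemma canonicalMap_tmul (I : Submodule k H) (g g' : H) {ι : Type*} (r : Repr k g' ι) :
    canonicalMap I (g ⊗ₜ g') = ∑ i ∈ r.index, (g * r.left i) ⊗ₜ I.mkQ (r.right i) := by
  simp [canonicalMap, ← r.eq, tmul_sum]

lemma canonicalMap_antipode_comul (I : Submodule k H) (x : H) :
    canonicalMap I ((antipode k).rTensor H (comul x)) = 1 ⊗ₜ I.mkQ x := by
  let r := ℛ k x
  let F : H ⊗[k] (H ⊗[k] H) →ₗ[k] H ⊗[k] (H ⧸ I) :=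
    TensorProduct.map (mul' k H ∘ₗ (antipode k).rTensor H) I.mkQ ∘ₗ
      (TensorProduct.assoc k H H H).symm.toLinearMap
  -- `F (x ⊗ (y ⊗ z)) = S(x) y ⊗ π(z)`, applied to coassociativity
  have hcoassoc := congr(F $(sum_tmul_tmul_eq r (fun i ↦ ℛ k (r.left i)) fun i ↦ ℛ k (r.right i)))
  simp only [map_sum, F, coe_comp, Function.comp_apply, LinearEquiv.coe_coe,
    TensorProduct.assoc_symm_tmul, map_tmul, rTensor_tmul, mul'_apply] at hcoassoc
  rw [← r.eq]
  simp only [map_sum, rTensor_tmul]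
  rw [Finset.sum_congr rfl fun i _ ↦
    canonicalMap_tmul I (antipode k (r.left i)) (r.right i) (ℛ k (r.right i))]
  simp only [← hcoassoc, ← sum_tmul, sum_antipode_mul_eq_smul, smul_tmul, ← tmul_sum,
    ← map_smul, ← map_sum, sum_counit_smul]

lemma adAct_tmul_eq_antipode_comul (x n : H) :
    adAct k H (x ⊗ₜ n) = (mul' k H ∘ₗ (mulRight k n).rTensor H ∘ₗ
      (TensorProduct.comm k H H).toLinearMap) ((antipode k).rTensor H (comul x)) := by
  simp [adAct_tmul (ℛ k x), ← (ℛ k x).eq]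

lemma adAct_mem_commB_of_ker_canonicalMap_le {I : Submodule k H}
    (hcan : ker (canonicalMap I) ≤ balancingRel I) {x : H} (hx : x ∈ I) (n : H) :
    adAct k H (x ⊗ₜ n) ∈ commB k H I := by
  have hrel : (antipode k).rTensor H (comul x) ∈ balancingRel I := hcan <| by
    rw [mem_ker, canonicalMap_antipode_comul, Submodule.mkQ_apply,
      (Submodule.Quotient.mk_eq_zero I).mpr hx, tmul_zero]
  rw [adAct_tmul_eq_antipode_comul]
  refine (Submodule.span_le.mpr ?_ : balancingRel I ≤ (commB k H I).comap _) hrel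
  rintro _ ⟨g, g', b, hb, rfl⟩
  exact Submodule.subset_span ⟨g' * n * g, b, hb, by simp [mul_assoc]⟩

lemma IsCoinvariant.comul_sub_tmul_one_mem {I : Submodule k H} {b : H}
    (hb : IsCoinvariant k H I b) :
    comul b - b ⊗ₜ 1 ∈ range (I.subtype.lTensor H) :=
  (lTensor_exact H (LinearMap.exact_subtype_mkQ I) I.mkQ_surjective _).mp <| by
    rw [map_sub, hb, lTensor_tmul, sub_self]

lemma IsCoinvariant.mul_sub_mul_mem {I : Submodule k H} {b : H} (hb : IsCoinvariant k H I b)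
    {P : Submodule k H} (hP : ∀ x ∈ I, ∀ u : H, adAct k H (x ⊗ₜ u) ∈ P) (m : H) :
    m * b - b * m ∈ P := by
  -- `Φ (x ⊗ y) = y ▷ (m x)`, so `Φ (Δb - b ⊗ 1) = b m - m b`
  let Φ : H ⊗[k] H →ₗ[k] H :=
    adAct k H ∘ₗ (TensorProduct.comm k H H).toLinearMap ∘ₗ (mulLeft k m).rTensor H
  have hΦ : ∀ τ, Φ (I.subtype.lTensor H τ) ∈ P := fun τ ↦ by
    induction τ using TensorProduct.induction_on with
    | zero => simp
    | tmul a x => simpa [Φ] using hP x x.2 (m * a)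
    | add τ τ' h h' => simpa using P.add_mem h h'
  obtain ⟨τ, hτ⟩ := hb.comul_sub_tmul_one_mem
  have hΦb : Φ (comul b - b ⊗ₜ 1) = b * m - m * b := by
    rw [← (ℛ k b).eq]
    simp [Φ, sum_adAct_tmul_mul]
  rw [← neg_sub, ← hΦb, ← hτ]
  exact P.neg_mem (hΦ τ)

lemma commB_le {I : Submodule k H} {P : Submodule k H}
    (hP : ∀ x ∈ I, ∀ u : H, adAct k H (x ⊗ₜ u) ∈ P) : commB k H I ≤ P :=
  Submodule.span_le.mpr <| by
    rintro _ ⟨m, b, hb, rfl⟩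
    exact hb.mul_sub_mul_mem hP m

abbrev AdTensor (I : Submodule k H) : Type u := ((H ⧸ I) ⊗[k] H) ⧸ relAdZero k H I

@[simp]
lemma AdTensor.mk_tmul_adAct (I : Submodule k H) (v p m : H) :
    (Submodule.Quotient.mk (Submodule.Quotient.mk v ⊗ₜ adAct k H (p ⊗ₜ m)) : AdTensor I) =
      Submodule.Quotient.mk (Submodule.Quotient.mk (v * p) ⊗ₜ m) := by
  rw [eq_comm, Submodule.Quotient.eq]
  exact Submodule.subset_span ⟨v, p, m, rfl⟩

def toAdTensor (I : Submodule k H) : (H ⧸ commB k H I) →ₗ[k] AdTensor I :=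
  (commB k H I).liftQ ((relAdZero k H I).mkQ ∘ₗ TensorProduct.mk k (H ⧸ I) H (I.mkQ 1)) <|
    commB_le fun x hx u ↦ by
      simp [(Submodule.Quotient.mk_eq_zero I).mpr hx]

@[simp]
lemma toAdTensor_mk (I : Submodule k H) (h : H) :
    toAdTensor I (Submodule.Quotient.mk h) = Submodule.Quotient.mk (I.mkQ 1 ⊗ₜ h) :=
  rfl

section OfAdTensor

variable {I : Submodule k H} (hcan : ker (canonicalMap I) ≤ balancingRel I)

def adActMod : (H ⧸ I) →ₗ[k] H →ₗ[k] H ⧸ commB k H I :=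
  I.liftQ (TensorProduct.curry ((commB k H I).mkQ ∘ₗ adAct k H)) fun x hx ↦
    LinearMap.ext fun u ↦ (Submodule.Quotient.mk_eq_zero _).mpr <| by
      simpa using adAct_mem_commB_of_ker_canonicalMap_le hcan hx u

@[simp]
lemma adActMod_mk (v m : H) :
    adActMod hcan (Submodule.Quotient.mk v) m = Submodule.Quotient.mk (adAct k H (v ⊗ₜ m)) :=
  rfl

def ofAdTensor : AdTensor I →ₗ[k] H ⧸ commB k H I :=
  (relAdZero k H I).liftQ (TensorProduct.lift (adActMod hcan)) <| Submodule.span_le.mpr <| by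
    rintro _ ⟨v, p, m, rfl⟩
    simp [adAct_mul_tmul]

@[simp]
lemma ofAdTensor_mk_tmul (v m : H) :
    ofAdTensor hcan (Submodule.Quotient.mk (Submodule.Quotient.mk v ⊗ₜ m)) =
      Submodule.Quotient.mk (adAct k H (v ⊗ₜ m)) :=
  rfl

def quotCommBEquivAdTensor : (H ⧸ commB k H I) ≃ₗ[k] AdTensor I :=
  LinearEquiv.ofLinearMap (toAdTensor I) (ofAdTensor hcan)
    (Submodule.linearMap_qext _ <| TensorProduct.ext' fun v m ↦ by
      obtain ⟨v, rfl⟩ := I.mkQ_surjective v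
      simp)
    (Submodule.linearMap_qext _ <| LinearMap.ext fun h ↦ by simp)

end OfAdTensor

section LeftMul

variable {I : Submodule k H} (hI : ∀ x ∈ I, ∀ h : H, h * x ∈ I)

def AdTensor.leftMul (h : H) : AdTensor I →ₗ[k] AdTensor I :=
  Submodule.mapQ _ _
    ((I.mapQ I (mulLeft k h) fun x hx ↦ Submodule.mem_comap.mpr (hI x hx h)).rTensor H) <|
    Submodule.span_le.mpr <| by
      rintro _ ⟨v, p, m, rfl⟩
      exact Submodule.subset_span ⟨h * v, p, m, by simp [Submodule.mapQ_apply, mul_assoc]⟩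

@[simp]
lemma AdTensor.leftMul_mk_tmul (h v m : H) :
    AdTensor.leftMul hI h (Submodule.Quotient.mk (Submodule.Quotient.mk v ⊗ₜ m)) =
      Submodule.Quotient.mk (Submodule.Quotient.mk (h * v) ⊗ₜ m) :=
  rfl

lemma toAdTensor_mk_adAct (h h' : H) :
    toAdTensor I (Submodule.Quotient.mk (adAct k H (h ⊗ₜ h'))) =
      AdTensor.leftMul hI h (toAdTensor I (Submodule.Quotient.mk h')) := by
  simp

end LeftMul

lemma relMU_eq_relH {I : Submodule k H} {N : Type u} [AddCommGroup N] [Module k N]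
    {r : N →ₗ[k] H →ₗ[k] N} (hr : ∀ n : N, ∀ x ∈ I, r n x = 0) :
    relMU k H N r I = relH k H N r := by
  refine le_antisymm (Submodule.span_le.mpr ?_) (Submodule.span_mono Set.subset_union_left)
  rintro _ (⟨n, p, m, rfl⟩ | ⟨n, m, b, hb, rfl⟩)
  · exact Submodule.subset_span ⟨n, p, m, rfl⟩
  · refine hb.mul_sub_mul_mem (P := (relH k H N r).comap (TensorProduct.mk k N H n))
      (fun x hx u ↦ ?_) m
    have hgen : r n x ⊗ₜ u - n ⊗ₜ adAct k H (x ⊗ₜ u) ∈ relH k H N r :=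
      Submodule.subset_span ⟨n, x, u, rfl⟩
    simpa [hr n x hx] using hgen

end

theorem jara_stefan_comparison
    {k : Type u} [Field k] {H : Type u} [Ring H] [HopfAlgebra k H]
    (I : Submodule k H) (hI : IsHopfIdeal k H I)
    -- homogeneous quotient-Hopf–Galois hypothesis: the canonical map is bijective
    (hGal : ∃ e : ((H ⊗[k] H) ⧸ Submodule.span k
          {x : H ⊗[k] H | ∃ g g' b : H, IsCoinvariant k H I b ∧
            x = (g * b) ⊗ₜ[k] g' - g ⊗ₜ[k] (b * g')}) ≃ₗ[k] H ⊗[k] (H ⧸ I),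
        ∀ x : H ⊗[k] H, e (Submodule.Quotient.mk x) =
          ((LinearMap.rTensor (H ⧸ I) (LinearMap.mul' k H)).comp
            (((TensorProduct.assoc k H H (H ⧸ I)).symm.toLinearMap).comp
              (LinearMap.lTensor H
                ((LinearMap.lTensor H I.mkQ).comp (Coalgebra.comul (R := k)))))) x) :
    -- `φ₀ : [H]_B ≃ (H/I) ⊗_H ad(H)`, `[h]_B ↦ π(1) ⊗_H h` ...
    ∃ e : (H ⧸ commB k H I) ≃ₗ[k] (((H ⧸ I) ⊗[k] H) ⧸ relAdZero k H I),
      (∀ h : H, e (Submodule.Quotient.mk h) =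
        Submodule.Quotient.mk ((I.mkQ 1) ⊗ₜ[k] h)) ∧
      -- ... is `H/I`-linear: Miyashita–Ulbrich action on the source, left multiplication
      -- (through `π`) on the first factor of the target
      (∀ h h' x m : H,
        e (Submodule.Quotient.mk h') =
            (Submodule.Quotient.mk (p := relAdZero k H I) ((I.mkQ x) ⊗ₜ[k] m)) →
        e (Submodule.Quotient.mk (adAct k H (h ⊗ₜ[k] h'))) =
            Submodule.Quotient.mk ((I.mkQ (h * x)) ⊗ₜ[k] m)) ∧
      -- consequently `- ⊗_{H/I} [ad(H)]_B ≅ - ⊗_H ad(H)`: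
      (∀ (N : Type u) [AddCommGroup N] [Module k N] (r : N →ₗ[k] H →ₗ[k] N),
        (∀ n : N, r n 1 = n) →
        (∀ (n : N) (g g' : H), r (r n g) g' = r n (g * g')) →
        (∀ (n : N), ∀ x ∈ I, r n x = 0) →
        ∃ e' : ((N ⊗[k] H) ⧸ relMU k H N r I) ≃ₗ[k] ((N ⊗[k] H) ⧸ relH k H N r),
          ∀ w : N ⊗[k] H,
            e' (Submodule.Quotient.mk w) = Submodule.Quotient.mk w) := by
  obtain ⟨can, hcan⟩ := hGal
  have hinj : LinearMap.ker (canonicalMap I) ≤ balancingRel I := fun w hw ↦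
    (Submodule.Quotient.mk_eq_zero _).mp <| can.map_eq_zero_iff.mp <| (hcan w).trans hw
  refine ⟨quotCommBEquivAdTensor hinj, fun _ ↦ rfl, fun h h' x m hh' ↦ ?_,
    fun N _ _ r _ _ hr ↦ ⟨Submodule.quotEquivOfEq _ _ (relMU_eq_relH hr), fun _ ↦ rfl⟩⟩
  change toAdTensor I _ = _ at hh' ⊢
  rw [toAdTensor_mk_adAct hI.2.1, hh']
  rfl
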